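/- Let a₁, a₂ be positive integers coprime to a positive integer b. Then I(a₁,b) ≡ I(a₂,b) (mod b) if and only if 3·s(a₁,b) - 3·s(a₂,b) is an integer. -/

import Mathlib

/-!
Write `r k = a k mod b`. For `i < j` the residue `r j` is `r i + r (j - i)` reduced mod `b`, so
`b · [r j < r i] = r i + r (j - i) - r j`, and summing over all pairs `i < j` makes `b · I(a, b)`
a linear form `∑ (2b - 1 - 3k) r k` in the residues. Expanding the sawtooth functions, `b² s(a, b)`
is `∑ (k - b/2)(r k - b/2)` up to a constant. Since `k ↦ r k` permutes `{0, …, b - 1}`, eliminating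
`∑ k r k` gives Meyer's formula `I(a, b) = (b - 1)(b - 2)/4 - 3b s(a, b)`, so
`3 s(a₁, b) - 3 s(a₂, b) = (I(a₂, b) - I(a₁, b)) / b`.
-/

/-- The sawtooth function ((x)) = x - ⌊x⌋ - 1/2 for non-integer x, and 0 for integer x. -/
def saw (x : ℚ) : ℚ := if x.den = 1 then 0 else x - ⌊x⌋ - 1/2

/-- The Dedekind sum s(a,b) = Σ_{k=1}^{b-1} ((k/b))((ka/b)). -/
def dedekindSum (a b : ℕ) : ℚ :=
  ∑ k ∈ Finset.range b, saw ((k : ℚ) / b) * saw ((k * a : ℚ) / b)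

/-- I(a,b): the number of inversions of the permutation x ↦ ax mod b on {0,...,b-1}. -/
def inv' (a b : ℕ) : ℕ :=
  (((Finset.range b) ×ˢ (Finset.range b)).filter
    (fun p => p.1 < p.2 ∧ (a * p.2) % b < (a * p.1) % b)).card

open Finset

lemma saw_natCast_div {m b : ℕ} (hb : 0 < b) (hm : ¬ b ∣ m) :
    saw ((m : ℚ) / b) = ((m % b : ℕ) : ℚ) / b - 1 / 2 := by
  have hfloor : ⌊(m : ℚ) / b⌋ = ((m / b : ℕ) : ℤ) := by
    exact_mod_cast Rat.floor_natCast_div_natCast m b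
  have hdiv : (m : ℚ) = b * ((m / b : ℕ) : ℚ) + ((m % b : ℕ) : ℚ) := by
    exact_mod_cast (Nat.div_add_mod m b).symm
  rw [saw, if_neg (by rwa [Rat.den_div_natCast_eq_one_iff m b hb.ne']), hfloor, Int.cast_natCast]
  field_simp
  linarith

lemma sum_range_mul_mod {M : Type*} [AddCommMonoid M] {a b : ℕ} (h : a.Coprime b) (g : ℕ → M) :
    ∑ k ∈ range b, g (a * k % b) = ∑ k ∈ range b, g k := by
  have hmaps : ∀ k ∈ range b, a * k % b ∈ range b := fun k hk =>
    mem_range.2 (Nat.mod_lt _ (pos_of_ne_zero (by rintro rfl; simp at hk)))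
  have hinj : Set.InjOn (fun k => a * k % b) (range b) := fun x hx y hy hxy =>
    (Nat.ModEq.cancel_left_of_coprime (Nat.coprime_comm.1 h) hxy).eq_of_lt_of_lt
      (mem_range.1 hx) (mem_range.1 hy)
  exact sum_nbij (g := g) _ hmaps hinj (surjOn_of_injOn_of_card_le _ hmaps hinj le_rfl)
    fun _ _ => rfl

lemma sum_range_natCast (n : ℕ) : ∑ k ∈ range n, (k : ℚ) = n * (n - 1) / 2 := by
  induction n with
  | zero => simp
  | succ n ih => rw [sum_range_succ, ih]; push_cast; ring

lemma add_mod_add_mul_carry (x y b : ℕ) :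
    (x + y) % b + b * (if (x + y) % b < x % b then 1 else 0) = x % b + y % b := by
  rcases b.eq_zero_or_pos with rfl | hb
  · simp
  have := Nat.mod_lt x hb
  have := Nat.mod_lt y hb
  rw [Nat.add_mod_eq_ite]
  split_ifs <;> omega

section TriangleSums

variable {R : Type*} [CommRing R] (g : ℕ → R) (n : ℕ)

lemma sum_range_sum_range_outer :
    ∑ j ∈ range n, ∑ _i ∈ range j, g j = ∑ k ∈ range n, (k : R) * g k := by
  simp [nsmul_eq_mul]

lemma sum_range_sum_range_inner :
    ∑ j ∈ range n, ∑ i ∈ range j, g i = ∑ k ∈ range n, ((n : R) - 1 - k) * g k := by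
  induction n with
  | zero => simp
  | succ n ih =>
    rw [sum_range_succ, ih, sum_range_succ _ n, ← sum_add_distrib]
    push_cast
    rw [show (n : R) + 1 - 1 - n = 0 by ring, zero_mul, add_zero]
    exact sum_congr rfl fun k _ => by ring

lemma sum_range_sum_range_sub :
    ∑ j ∈ range n, ∑ i ∈ range j, g (j - i) = ∑ k ∈ range n, ((n : R) - k) * g k - n * g 0 := by
  induction n with
  | zero => simp
  | succ n ih =>
    have hreflect : ∑ i ∈ range n, g (n - i) = ∑ k ∈ range (n + 1), g k - g 0 := by
      rw [sum_range_succ', add_sub_cancel_right, ← sum_range_reflect]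
      exact sum_congr rfl fun i hi => by rw [mem_range] at hi; congr 1; omega
    have hshift : ∑ k ∈ range n, ((n + 1 : ℕ) - (k : R)) * g k
        = ∑ k ∈ range n, ((n : R) - k) * g k + ∑ k ∈ range n, g k := by
      rw [← sum_add_distrib]; push_cast; exact sum_congr rfl fun k _ => by ring
    rw [sum_range_succ, ih, hreflect, sum_range_succ g, sum_range_succ _ n, hshift]
    push_cast
    ring

end TriangleSums

lemma inv'_eq_sum (a b : ℕ) :
    inv' a b = ∑ j ∈ range b, ∑ i ∈ range j, if a * j % b < a * i % b then 1 else 0 := by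
  rw [inv', ← filter_filter, card_filter, sum_filter, sum_product_right]
  refine sum_congr rfl fun j hj => ?_
  rw [← sum_filter]
  congr 1
  ext i
  simp only [mem_filter, mem_range] at hj ⊢
  omega

lemma natCast_mul_inv' (a b : ℕ) :
    (b : ℚ) * inv' a b = ∑ k ∈ range b, (2 * b - 1 - 3 * k : ℚ) * ((a * k % b : ℕ) : ℚ) := by
  set r : ℕ → ℚ := fun k => ((a * k % b : ℕ) : ℚ)
  have hcarry : ∀ j, ∀ i ∈ range j, (b : ℚ) * ((if a * j % b < a * i % b then 1 else 0 : ℕ) : ℚ)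
      = r i + r (j - i) - r j := fun j i hi => by
    have := add_mod_add_mul_carry (a * i) (a * (j - i)) b
    rw [← Nat.mul_add, Nat.add_sub_cancel' (mem_range.1 hi).le] at this
    simp only [r]
    rw [eq_sub_iff_add_eq, add_comm]
    exact_mod_cast this
  have hr0 : r 0 = 0 := by simp [r]
  rw [inv'_eq_sum]
  simp_rw [Nat.cast_sum, mul_sum]
  rw [sum_congr rfl fun j _ => sum_congr rfl (hcarry j)]
  simp only [sum_sub_distrib, sum_add_distrib]
  rw [sum_range_sum_range_inner, sum_range_sum_range_sub, sum_range_sum_range_outer, hr0, mul_zero,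
    sub_zero, ← sum_add_distrib, ← sum_sub_distrib]
  exact sum_congr rfl fun k _ => by ring

lemma sq_mul_dedekindSum {a b : ℕ} (h : a.Coprime b) :
    (b : ℚ) ^ 2 * dedekindSum a b
      = ∑ k ∈ range b, ((k : ℚ) - b / 2) * (((a * k % b : ℕ) : ℚ) - b / 2) - b ^ 2 / 4 := by
  rcases b.eq_zero_or_pos with rfl | hb
  · simp [dedekindSum]
  have hterm : ∀ k ∈ range b, (b : ℚ) ^ 2 * (saw ((k : ℚ) / b) * saw ((k * a : ℚ) / b))
      = ((k : ℚ) - b / 2) * (((a * k % b : ℕ) : ℚ) - b / 2)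
        - if k = 0 then (b : ℚ) ^ 2 / 4 else 0 := by
    intro k hk
    rw [mem_range] at hk
    rcases k.eq_zero_or_pos with rfl | hk0
    · norm_num [saw]
      ring
    have hkb : ¬ b ∣ k := fun hd => absurd (Nat.le_of_dvd hk0 hd) (by omega)
    have hka : ¬ b ∣ k * a := fun hd => hkb (h.symm.dvd_of_dvd_mul_right hd)
    rw [← Nat.cast_mul, saw_natCast_div hb hkb, saw_natCast_div hb hka, Nat.mod_eq_of_lt hk,
      Nat.mul_comm k a, if_neg hk0.ne']
    field_simp
    ring
  rw [dedekindSum, mul_sum, sum_congr rfl hterm, sum_sub_distrib, sum_ite_eq',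
    if_pos (mem_range.2 hb)]

theorem inv'_eq_sub_mul_dedekindSum {a b : ℕ} (hb : 0 < b) (h : a.Coprime b) :
    (inv' a b : ℚ) = ((b : ℚ) - 1) * (b - 2) / 4 - 3 * b * dedekindSum a b := by
  have hinv := natCast_mul_inv' a b
  have hded := sq_mul_dedekindSum h
  have hres : ∑ k ∈ range b, ((a * k % b : ℕ) : ℚ) = b * (b - 1) / 2 := by
    rw [sum_range_mul_mod h (fun k => (k : ℚ)), sum_range_natCast]
  have hcomb : ∑ k ∈ range b, (2 * b - 1 - 3 * k : ℚ) * ((a * k % b : ℕ) : ℚ)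
      + 3 * ∑ k ∈ range b, ((k : ℚ) - b / 2) * (((a * k % b : ℕ) : ℚ) - b / 2)
      = ((b : ℚ) / 2 - 1) * ∑ k ∈ range b, ((a * k % b : ℕ) : ℚ)
        - 3 * b / 2 * ∑ k ∈ range b, (k : ℚ) + b * (3 * b ^ 2 / 4) := by
    have hterm : ∀ k : ℕ, (2 * b - 1 - 3 * k : ℚ) * ((a * k % b : ℕ) : ℚ)
        + 3 * (((k : ℚ) - b / 2) * (((a * k % b : ℕ) : ℚ) - b / 2))
        = ((b : ℚ) / 2 - 1) * ((a * k % b : ℕ) : ℚ) - 3 * b / 2 * k + 3 * b ^ 2 / 4 :=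
      fun k => by ring
    rw [mul_sum, ← sum_add_distrib, sum_congr rfl fun k _ => hterm k, sum_add_distrib,
      sum_sub_distrib, sum_const, card_range, nsmul_eq_mul, mul_sum, mul_sum]
  have hb' : (b : ℚ) ≠ 0 := by positivity
  apply mul_left_cancel₀ (pow_ne_zero 2 hb')
  rw [hres, sum_range_natCast] at hcomb
  linear_combination b * hinv + 3 * b * hded + b * hcomb

lemma exists_intCast_eq_div_iff_dvd {d m : ℤ} (hm : m ≠ 0) :
    (∃ n : ℤ, (d : ℚ) / m = n) ↔ m ∣ d := by
  constructor
  · rintro ⟨n, hn⟩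
    rw [div_eq_iff (by exact_mod_cast hm)] at hn
    exact ⟨n, by rw [mul_comm]; exact_mod_cast hn⟩
  · rintro ⟨n, rfl⟩
    exact ⟨n, by push_cast; field_simp⟩

theorem inv_congr_iff_three_int_general (a₁ a₂ b : ℕ) (hb : 0 < b)
    (h₁ : Nat.Coprime a₁ b) (h₂ : Nat.Coprime a₂ b) :
    (inv' a₁ b : ℤ) ≡ inv' a₂ b [ZMOD (b : ℤ)] ↔
      ∃ n : ℤ, 3 * dedekindSum a₁ b - 3 * dedekindSum a₂ b = n := by
  have hdiff : 3 * dedekindSum a₁ b - 3 * dedekindSum a₂ b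
      = ((inv' a₂ b - inv' a₁ b : ℤ) : ℚ) / (b : ℤ) := by
    rw [eq_div_iff (by positivity)]
    push_cast
    linear_combination inv'_eq_sub_mul_dedekindSum hb h₁ - inv'_eq_sub_mul_dedekindSum hb h₂
  rw [Int.modEq_iff_dvd, hdiff, exists_intCast_eq_div_iff_dvd (by positivity)]

theorem inv_congr_iff_three_int (a₁ a₂ b : ℕ) (ha₁ : 0 < a₁) (ha₂ : 0 < a₂) (hb : 0 < b)
    (h₁ : Nat.Coprime a₁ b) (h₂ : Nat.Coprime a₂ b) :
    (inv' a₁ b : ℤ) ≡ inv' a₂ b [ZMOD (b : ℤ)] ↔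
      ∃ n : ℤ, 3 * dedekindSum a₁ b - 3 * dedekindSum a₂ b = n :=
  inv_congr_iff_three_int_general a₁ a₂ b hb h₁ h₂
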